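/- The strict graph-theoretic analogue of the Li–Yau inequality fails: there is no constant κ > 0 such that sgon(G) ≥ κ · λ_G · vol(G) for every connected graph G. Equivalently, for every κ > 0 there exists a connected graph G (for instance a complete graph K_n with n sufficiently large, for which sgon(K_n) ≤ n − 1, λ_{K_n} = n and vol(K_n) = n(n−1)) with sgon(G) < κ · λ_G · vol(G). -/

import Mathlib

/-!  Finite multigraphs, harmonic morphisms, refinements and stable gonality,
     following Cornelissen–Kato–Kool, "A combinatorial Li–Yau inequality and
     rational points on curves".  -/

attribute [local instance] Classical.propDecidable

noncomputable section

/-- A finite multigraph: a finite vertex type, a finite edge type, and for each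
edge its two (possibly equal) endpoints. -/
structure MGraph where
  V : Type
  E : Type
  [vFin : Fintype V]
  [eFin : Fintype E]
  fst : E → V
  snd : E → V

attribute [instance] MGraph.vFin MGraph.eFin

namespace MGraph

variable (G : MGraph)

/-- The edge `e` is incident to the vertex `v`. -/
def Inc (e : G.E) (v : G.V) : Prop := G.fst e = v ∨ G.snd e = v

/-- The edge `e` joins the vertices `x` and `y` (unordered). -/
def Joins (e : G.E) (x y : G.V) : Prop :=
  (G.fst e = x ∧ G.snd e = y) ∨ (G.fst e = y ∧ G.snd e = x)

/-- Two vertices are adjacent if some edge joins them. -/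
def Adj (x y : G.V) : Prop := ∃ e, G.Joins e x y

/-- A multigraph is connected if it is nonempty and any two vertices are joined
by a walk. -/
def Connected : Prop := Nonempty G.V ∧ ∀ x y : G.V, Relation.ReflTransGen G.Adj x y

/-- No loops. -/
def Loopless : Prop := ∀ e : G.E, G.fst e ≠ G.snd e

/-- A simple graph: no loops and no multiple edges. -/
def Simple : Prop :=
  G.Loopless ∧ ∀ e e' : G.E, G.Joins e' (G.fst e) (G.snd e) → e = e'

/-- A tree is a connected graph of genus `|E| - |V| + 1 = 0`. -/
def IsTree : Prop := G.Connected ∧ Fintype.card G.V = Fintype.card G.E + 1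

/-- The degree of a vertex (loops count twice). -/
def degree (v : G.V) : ℕ :=
  (Finset.univ.filter fun e => G.fst e = v).card +
    (Finset.univ.filter fun e => G.snd e = v).card

/-- The maximal vertex degree `Δ_G`. -/
def maxDegree : ℕ := Finset.univ.sup G.degree

/-- The volume `vol(G) = Σ_v deg v = 2 |E|`. -/
def vol : ℕ := ∑ v, G.degree v

/-- The number of edges joining `x` and `y`. -/
def numEdges (x y : G.V) : ℕ := (Finset.univ.filter fun e => G.Joins e x y).card

/-- The Laplacian matrix `L_G = D_G - A_G`. -/
def lapMatrix : Matrix G.V G.V ℝ := fun x y =>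
  (if x = y then (G.degree x : ℝ) else 0) - (G.numEdges x y : ℝ)

/-- `lam` is the smallest nonzero eigenvalue `λ_G` of the Laplacian of `G`. -/
def IsFirstLapEigenvalue (lam : ℝ) : Prop :=
  IsLeast {μ : ℝ | μ ≠ 0 ∧ ∃ f : G.V → ℝ, f ≠ 0 ∧ G.lapMatrix.mulVec f = μ • f} lam

/-- The normalized Laplacian `D^{-1/2} L D^{-1/2}`. -/
def normLapMatrix : Matrix G.V G.V ℝ := fun x y =>
  G.lapMatrix x y / (Real.sqrt (G.degree x) * Real.sqrt (G.degree y))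

/-- `lam` is the smallest nonzero eigenvalue of the normalized Laplacian of `G`. -/
def IsFirstNormLapEigenvalue (lam : ℝ) : Prop :=
  IsLeast {μ : ℝ | μ ≠ 0 ∧ ∃ f : G.V → ℝ, f ≠ 0 ∧ G.normLapMatrix.mulVec f = μ • f} lam

/-- Reachability by walks staying inside the vertex set `S`. -/
def ReachIn (S : Set G.V) (x y : G.V) : Prop :=
  Relation.ReflTransGen (fun a b => a ∈ S ∧ b ∈ S ∧ G.Adj a b) x y

/-- Reachability by walks not using the edge `e₀`. -/
def ReachAvoidEdge (e₀ : G.E) (x y : G.V) : Prop :=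
  Relation.ReflTransGen (fun a b => ∃ e, e ≠ e₀ ∧ G.Joins e a b) x y

/-- The connected component of `G - e` containing the vertex `v`. -/
def edgeSide (e : G.E) (v : G.V) : Set G.V := {y | G.ReachAvoidEdge e v y}

/-- The connected component of `G - x` containing the vertex `y`. -/
def vertexSide (x y : G.V) : Set G.V := {z | G.ReachIn {v | v ≠ x} y z}

end MGraph

/-- The mass `ν(S)` of a set of vertices. -/
def mass {V : Type} [Fintype V] (ν : V → ℝ) (S : Set V) : ℝ :=
  ∑ v ∈ Finset.univ.filter (fun v => v ∈ S), ν v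

/-- A probability measure on a finite vertex set. -/
def IsProbMeasure {V : Type} [Fintype V] (ν : V → ℝ) : Prop :=
  (∀ v, 0 ≤ ν v) ∧ ∑ v, ν v = 1

namespace MGraph

/-- The size of an edge `e` of a measured tree `(T, ν)`:
`min(ν(T₁(e)), ν(T₂(e)))`. -/
def edgeSize (G : MGraph) (ν : G.V → ℝ) (e : G.E) : ℝ :=
  min (mass ν (G.edgeSide e (G.fst e))) (mass ν (G.edgeSide e (G.snd e)))

/-- `(T, ν)` is `c`-thick: for every vertex `x`, `T - x` has a connected
component of measure at least `c`. -/
def Thick (G : MGraph) (ν : G.V → ℝ) (c : ℝ) : Prop :=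
  ∀ x : G.V, ∃ y : G.V, y ≠ x ∧ c ≤ mass ν (G.vertexSide x y)

/-- Subdivision of the edge `e₀`: a new vertex in the middle of `e₀`,
and `e₀` replaced by two new edges. -/
def subdivide (G : MGraph) (e₀ : G.E) : MGraph where
  V := G.V ⊕ Unit
  E := {e : G.E // e ≠ e₀} ⊕ Bool
  vFin := inferInstance
  eFin := inferInstance
  fst := fun e => match e with
    | Sum.inl e1 => Sum.inl (G.fst e1.1)
    | Sum.inr false => Sum.inl (G.fst e₀)
    | Sum.inr true => Sum.inr ()
  snd := fun e => match e with
    | Sum.inl e1 => Sum.inl (G.snd e1.1)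
    | Sum.inr false => Sum.inr ()
    | Sum.inr true => Sum.inl (G.snd e₀)

/-- Addition of a leaf at the vertex `v₀`: one new vertex, joined to `v₀` by
one new edge. -/
def addLeaf (G : MGraph) (v₀ : G.V) : MGraph where
  V := G.V ⊕ Unit
  E := G.E ⊕ Unit
  vFin := inferInstance
  eFin := inferInstance
  fst := Sum.elim (fun e => Sum.inl (G.fst e)) (fun _ => Sum.inl v₀)
  snd := Sum.elim (fun e => Sum.inl (G.snd e)) (fun _ => Sum.inr ())

/-- An isomorphism of multigraphs. -/
structure Iso (G H : MGraph) where
  eV : G.V ≃ H.V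
  eE : G.E ≃ H.E
  ends : ∀ e, H.Joins (eE e) (eV (G.fst e)) (eV (G.snd e))

/-- `Refines G G' ι p` means: `G'` is a refinement of `G` (obtained from `G`
by finitely many subdivisions of edges and additions of leaves, up to
isomorphism).  The map `ι` identifies the vertices of `G` inside `G'` and the
"provenance" map `p` records, for every edge of `G'`, the edge of `G` it lies
over (`none` for edges of added leaf-trees). -/
inductive Refines : ∀ (G G' : MGraph), (G.V → G'.V) → (G'.E → Option G.E) → Prop
  | refl (G : MGraph) : Refines G G id (fun e => some e)
  | subdiv {G G' : MGraph} {ι : G.V → G'.V} {p : G'.E → Option G.E}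
      (h : Refines G G' ι p) (e₀ : G'.E) :
      Refines G (subdivide G' e₀) (fun v => Sum.inl (ι v))
        (fun e => Sum.elim (fun e1 : {e : G'.E // e ≠ e₀} => p e1.1) (fun _ : Bool => p e₀) e)
  | leaf {G G' : MGraph} {ι : G.V → G'.V} {p : G'.E → Option G.E}
      (h : Refines G G' ι p) (v₀ : G'.V) :
      Refines G (addLeaf G' v₀) (fun v => Sum.inl (ι v))
        (fun e => Sum.elim (fun e1 : G'.E => p e1) (fun _ : Unit => none) e)
  | iso {G G' : MGraph} {ι : G.V → G'.V} {p : G'.E → Option G.E}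
      (h : Refines G G' ι p) {G'' : MGraph} (φ : Iso G' G'') :
      Refines G G'' (fun v => φ.eV (ι v)) (fun e => p (φ.eE.symm e))

/-- `Subdivides G G' ι`: `G'` is obtained from `G` by subdividing edges only
(no leaves added), up to isomorphism. -/
inductive Subdivides : ∀ (G G' : MGraph), (G.V → G'.V) → Prop
  | refl (G : MGraph) : Subdivides G G id
  | subdiv {G G' : MGraph} {ι : G.V → G'.V}
      (h : Subdivides G G' ι) (e₀ : G'.E) :
      Subdivides G (subdivide G' e₀) (fun v => Sum.inl (ι v))
  | iso {G G' : MGraph} {ι : G.V → G'.V}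
      (h : Subdivides G G' ι) {G'' : MGraph} (φ : Iso G' G'') :
      Subdivides G G'' (fun v => φ.eV (ι v))

/-- A finite harmonic (indexed) morphism of multigraphs: vertices map to
vertices, edges to edges (compatibly with endpoints), each edge `e` carries a
positive index `r e`, and around each vertex `v` the sums
`Σ_{e ∋ v, fE e = e'} r e` have a common value `m v > 0` for all edges `e'`
incident to the image of `v`. -/
structure FinHarm (G T : MGraph) where
  fV : G.V → T.V
  fE : G.E → T.E
  r : G.E → ℕ
  r_pos : ∀ e, 0 < r e
  ends : ∀ e, T.Joins (fE e) (fV (G.fst e)) (fV (G.snd e))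
  m : G.V → ℕ
  m_pos : ∀ v, 0 < m v
  harm : ∀ v : G.V, ∀ e' : T.E, T.Inc e' (fV v) →
    m v = ∑ e ∈ Finset.univ.filter (fun e => G.Inc e v ∧ fE e = e'), r e

/-- `φ` has degree `d`: over every vertex the `m`'s sum to `d` and over every
edge the indices sum to `d`. -/
def FinHarm.IsDegree {G T : MGraph} (φ : FinHarm G T) (d : ℕ) : Prop :=
  (∀ v' : T.V, ∑ v ∈ Finset.univ.filter (fun v => φ.fV v = v'), φ.m v = d) ∧
  (∀ e' : T.E, ∑ e ∈ Finset.univ.filter (fun e => φ.fE e = e'), φ.r e = d)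

/-- The set of degrees of finite harmonic morphisms from refinements of `G` to
trees; the stable gonality `sgon(G)` is the least element of this set. -/
def sgonSet (G : MGraph) : Set ℕ :=
  {d | ∃ (G' T : MGraph) (ι : G.V → G'.V) (p : G'.E → Option G.E),
        Refines G G' ι p ∧ G'.Loopless ∧ T.IsTree ∧
        ∃ φ : FinHarm G' T, φ.IsDegree d}

/-- `|φ⁻¹(S) ∩ V(G)|` for `S ⊆ V(T)`, `G'` a refinement of `G` via `ι`,
and `φ : G' → T`. -/
def pushCount {G G' T : MGraph} (ι : G.V → G'.V) (φ : FinHarm G' T) (S : Set T.V) : ℕ :=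
  (Finset.univ.filter (fun v : G.V => φ.fV (ι v) ∈ S)).card

/-- The pushforward measure `φ_* μ_G (S) = |φ⁻¹(S) ∩ V(G)| / |G|`. -/
def pushMeasure {G G' T : MGraph} (ι : G.V → G'.V) (φ : FinHarm G' T) (S : Set T.V) : ℝ :=
  (pushCount ι φ S : ℝ) / (Fintype.card G.V : ℝ)

/-- The size of an edge `e` of `T` with respect to the pushforward measure
`φ_* μ_G`. -/
def pushEdgeSize {G G' T : MGraph} (ι : G.V → G'.V) (φ : FinHarm G' T) (e : T.E) : ℝ :=
  min (pushMeasure ι φ (T.edgeSide e (T.fst e))) (pushMeasure ι φ (T.edgeSide e (T.snd e)))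

/-- The measured tree `(T, φ_* μ_G)` is `c`-thick. -/
def PushThick {G G' T : MGraph} (ι : G.V → G'.V) (φ : FinHarm G' T) (c : ℝ) : Prop :=
  ∀ x : T.V, ∃ y : T.V, y ≠ x ∧ c ≤ pushMeasure ι φ (T.vertexSide x y)

end MGraph

open MGraph

abbrev banana (k : ℕ) : MGraph where
  V := Bool
  E := Fin k
  fst := fun _ => false
  snd := fun _ => true

namespace Banana

variable (k : ℕ)

lemma degree_eq (v : Bool) : (banana k).degree v = k := by
  cases v <;>
  · unfold MGraph.degree banana
    simp

lemma vol_eq : (banana k).vol = 2 * k := by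
  show ∑ v : Bool, (banana k).degree v = 2 * k
  rw [Fintype.sum_bool, degree_eq, degree_eq]
  ring

lemma numEdges_self (x : Bool) : (banana k).numEdges x x = 0 := by
  unfold MGraph.numEdges MGraph.Joins banana
  cases x <;> simp

lemma numEdges_ne (x y : Bool) (h : x ≠ y) : (banana k).numEdges x y = k := by
  unfold MGraph.numEdges MGraph.Joins banana
  cases x <;> cases y <;> simp_all

lemma lap_ff : (banana k).lapMatrix false false = k := by
  unfold MGraph.lapMatrix
  rw [numEdges_self, degree_eq]; simp

lemma lap_tt : (banana k).lapMatrix true true = k := by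
  unfold MGraph.lapMatrix
  rw [numEdges_self, degree_eq]; simp

lemma lap_ft : (banana k).lapMatrix false true = -k := by
  unfold MGraph.lapMatrix
  rw [numEdges_ne _ _ _ (by simp)]; simp

lemma lap_tf : (banana k).lapMatrix true false = -k := by
  unfold MGraph.lapMatrix
  rw [numEdges_ne _ _ _ (by simp)]; simp

lemma connected (hk : 0 < k) : (banana k).Connected := by
  refine ⟨⟨false⟩, ?_⟩
  have hadj : ∀ x y : Bool, x ≠ y → (banana k).Adj x y := by
    intro x y h
    refine ⟨⟨0, hk⟩, ?_⟩
    unfold MGraph.Joins banana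
    cases x <;> cases y <;> simp_all
  intro x y
  by_cases h : x = y
  · exact h ▸ Relation.ReflTransGen.refl
  · exact Relation.ReflTransGen.single (hadj x y h)

lemma mulVec_eval (f : Bool → ℝ) (x : Bool) :
    (banana k).lapMatrix.mulVec f x =
      (banana k).lapMatrix x true * f true + (banana k).lapMatrix x false * f false := by
  show ∑ y : Bool, (banana k).lapMatrix x y * f y = _
  rw [Fintype.sum_bool]

lemma eig (hk : 0 < k) : (banana k).IsFirstLapEigenvalue (2 * k) := by
  have hk' : (0:ℝ) < k := by exact_mod_cast hk
  constructor
  · refine ⟨by positivity, (fun b : Bool => cond b (-1) 1 : Bool → ℝ), ?_, ?_⟩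
    · intro h
      have : (fun b : Bool => cond b (-1) 1 : Bool → ℝ) false = 0 := by rw [h]; rfl
      simp at this
    · funext x
      cases x
      · rw [mulVec_eval, lap_ft k, lap_ff k]
        simp [Pi.smul_apply]; ring
      · rw [mulVec_eval, lap_tt k, lap_tf k]
        simp [Pi.smul_apply]; ring
  · rintro μ ⟨hμ, f, hf0, hf⟩
    have h1 := congrFun hf false
    have h2 := congrFun hf true
    rw [mulVec_eval, lap_ft, lap_ff] at h1
    rw [mulVec_eval, lap_tt, lap_tf] at h2
    simp only [Pi.smul_apply, smul_eq_mul] at h1 h2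
    have hsum : μ * (f false + f true) = 0 := by linarith
    have hab : f true = -f false := by
      have : f false + f true = 0 := by
        rcases mul_eq_zero.mp hsum with h | h
        · exact absurd h hμ
        · exact h
      linarith
    have ha : f false ≠ 0 := by
      intro h
      apply hf0
      funext x
      cases x
      · exact h
      · rw [hab, h]; simp
    have hz : (2 * (k:ℝ) - μ) * f false = 0 := by rw [hab] at h1; ring_nf; ring_nf at h1; linarith
    have : μ = 2 * k := by
      rcases mul_eq_zero.mp hz with h | h
      · linarith
      · exact absurd h ha
    linarith

def bananaHarm (hk : 0 < k) : FinHarm (banana k) (banana 1) where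
  fV := (id : Bool → Bool)
  fE := fun _ => (0 : Fin 1)
  r := fun _ => 1
  r_pos := fun _ => one_pos
  ends := fun _ => Or.inl ⟨rfl, rfl⟩
  m := fun _ => k
  m_pos := fun _ => hk
  harm := by
    intro v e' _
    rw [Subsingleton.elim (α := Fin 1) e' 0]
    rw [Finset.sum_filter]
    cases v <;> simp [MGraph.Inc, banana]

lemma bananaHarm_fV (hk : 0 < k) : (bananaHarm k hk).fV = id := rfl
lemma bananaHarm_fE (hk : 0 < k) : (bananaHarm k hk).fE = fun _ => (0 : Fin 1) := rfl
lemma bananaHarm_r (hk : 0 < k) : (bananaHarm k hk).r = fun _ => 1 := rfl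
lemma bananaHarm_m (hk : 0 < k) : (bananaHarm k hk).m = fun _ => k := rfl

lemma bananaHarm_deg (hk : 0 < k) : (bananaHarm k hk).IsDegree k := by
  constructor
  · intro v'
    rw [Finset.sum_filter]
    simp only [bananaHarm_fV, bananaHarm_m, id]
    cases v' <;> simp
  · intro e'
    simp only [bananaHarm_fE, bananaHarm_r]
    rw [Subsingleton.elim (α := Fin 1) e' 0]
    simp only [Finset.sum_filter]
    have : Fintype.card (banana k).E = k := by
      show Fintype.card (Fin k) = k
      simp
    simp [this]

lemma mem_sgon (hk : 0 < k) : k ∈ sgonSet (banana k) := by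
  refine ⟨banana k, banana 1, id, (fun e => some e), Refines.refl _, ?_, ?_,
    bananaHarm k hk, bananaHarm_deg k hk⟩
  · intro e
    show (false : Bool) ≠ true
    simp
  · refine ⟨connected 1 one_pos, ?_⟩
    show Fintype.card Bool = Fintype.card (Fin 1) + 1
    simp

end Banana


/-- Remark "LYfout": the naive graph-theoretic analogue of
the Li–Yau inequality fails: for every `κ > 0` there is a connected graph `G`
(e.g. a large complete graph) with `sgon(G) < κ · λ_G · vol(G)`, i.e. some
refinement of `G` carries a finite harmonic morphism to a tree of degree less
than `κ · λ_G · vol(G)`. -/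
theorem li_yau_fails_for_graphs :
    ∀ κ : ℝ, 0 < κ → ∃ G : MGraph, G.Connected ∧
      ∃ lam : ℝ, G.IsFirstLapEigenvalue lam ∧
        ∃ d ∈ sgonSet G, (d : ℝ) < κ * lam * (G.vol : ℝ) := by
  intro κ hκ
  obtain ⟨n, hn⟩ := exists_nat_gt (1 / (4 * κ))
  set k := n + 1 with hkdef
  have hk : 0 < k := Nat.succ_pos n
  refine ⟨banana k, Banana.connected k hk, 2 * k, Banana.eig k hk, k, Banana.mem_sgon k hk, ?_⟩
  rw [Banana.vol_eq]
  have hcast : ((2 * k : ℕ) : ℝ) = 2 * (k : ℝ) := by push_cast; ring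
  rw [hcast]
  have hkr : (1:ℝ) / (4 * κ) < k := by
    calc (1:ℝ) / (4 * κ) < n := hn
    _ ≤ k := by exact_mod_cast Nat.le_succ n
  have hk0 : (0:ℝ) < k := lt_of_le_of_lt (by positivity) hkr
  have h1 : 1 < 4 * κ * k := by
    rw [div_lt_iff₀ (by positivity)] at hkr
    linarith
  nlinarith [mul_lt_mul_of_pos_left h1 hk0]
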